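/- arXiv:2101.06959 — 6 statements merged into one kernel-verified Lean document; each statement's English description precedes it below -/
import Mathlib

section
/- Let (X, T) be a topological dynamical system (X a compact metric space, T : X → X a homeomorphism), let d ∈ ℕ, and let p₁, …, p_d : ℤ → ℤ be arbitrary functions. The following are equivalent: (1) for all non-empty open sets U, V₁, …, V_d ⊆ X there exists n ∈ ℤ with U ∩ T^{−p₁(n)}V₁ ∩ ⋯ ∩ T^{−p_d(n)}V_d ≠ ∅; (2) there is a dense G_δ subset Y ⊆ X such that for every x ∈ Y the set {(T^{p₁(n)}x, …, T^{p_d(n)}x) : n ∈ ℤ} is dense in X^d. -/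
def Syndetic (S : Set ℤ) : Prop :=
  ∃ L : ℕ, ∀ n : ℤ, ∃ m ∈ S, n ≤ m ∧ m ≤ n + L

def ThicklySyndetic (S : Set ℤ) : Prop :=
  ∀ L : ℕ, ∃ B : Set ℤ, Syndetic B ∧ ∀ b ∈ B, ∀ j : ℤ, 0 ≤ j → j ≤ (L : ℤ) → b + j ∈ S

def Thick (S : Set ℤ) : Prop :=
  ∀ L : ℕ, ∃ a : ℤ, ∀ j : ℤ, 0 ≤ j → j ≤ (L : ℤ) → a + j ∈ S

noncomputable def nint (a : ℝ) : ℤ := ⌊a + 1/2⌋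

noncomputable def sfrac (a : ℝ) : ℝ := a - nint a

/-!
For `x` to have a dense orbit `{(T^{p₁(n)}x, …, T^{p_d(n)}x)}` it suffices that the orbit meets
every set of a countable basis of `X^d`; for a basis set `W` the points whose orbit meets `W` form
an open set, which condition (1) makes dense (a nonempty open subset of `X^d` contains a box
`V₁ × ⋯ × V_d`). So (1) makes the points with dense orbit a countable intersection of dense open
sets, dense by Baire. Conversely, a dense set of such points meets every nonempty open `U`, and
the orbit of a point of `U` enters every box.
-/

open Set TopologicalSpace

namespace Homeomorph

variable {X : Type*} [TopologicalSpace X]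

def toPerm : (X ≃ₜ X) →* Equiv.Perm X where
  toFun := Homeomorph.toEquiv
  map_one' := rfl
  map_mul' _ _ := rfl

theorem continuous_toEquiv_zpow (T : X ≃ₜ X) (n : ℤ) : Continuous ⇑(T.toEquiv ^ n) := by
  rw [show T.toEquiv ^ n = (T ^ n).toEquiv from (map_zpow toPerm T n).symm]
  exact (T ^ n).continuous

end Homeomorph

section DenseOrbit

variable {ι X Y : Type*} [TopologicalSpace Y]

def denseOrbitSet (f : ι → X → Y) : Set X := {x | Dense (range fun n => f n x)}

theorem denseOrbitSet_eq_biInter [SecondCountableTopology Y] (f : ι → X → Y) :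
    denseOrbitSet f = ⋂ o ∈ countableBasis Y, ⋃ n, f n ⁻¹' o := by
  ext x
  simp only [denseOrbitSet, mem_ofPred_eq, (isBasis_countableBasis Y).dense_iff, mem_iInter,
    mem_iUnion, mem_preimage]
  refine forall₂_congr fun o ho => ⟨fun h => ?_, fun ⟨n, hn⟩ _ => ⟨_, hn, n, rfl⟩⟩
  obtain ⟨_, hn, n, rfl⟩ := h (nonempty_of_mem_countableBasis ho)
  exact ⟨n, hn⟩

theorem isGδ_denseOrbitSet [TopologicalSpace X] [SecondCountableTopology Y] {f : ι → X → Y}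
    (hf : ∀ n, Continuous (f n)) : IsGδ (denseOrbitSet f) := by
  rw [denseOrbitSet_eq_biInter]
  exact .biInter_of_isOpen (countable_countableBasis Y) fun o ho =>
    isOpen_iUnion fun n => (isOpen_of_mem_countableBasis ho).preimage (hf n)

theorem dense_denseOrbitSet [TopologicalSpace X] [BaireSpace X] [SecondCountableTopology Y]
    {f : ι → X → Y} (hf : ∀ n, Continuous (f n))
    (H : ∀ U W, IsOpen U → U.Nonempty → IsOpen W → W.Nonempty → ∃ n, (U ∩ f n ⁻¹' W).Nonempty) :
    Dense (denseOrbitSet f) := by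
  rw [denseOrbitSet_eq_biInter]
  refine dense_biInter_of_isOpen (fun o ho => ?_) (countable_countableBasis Y) fun o ho => ?_
  · exact isOpen_iUnion fun n => (isOpen_of_mem_countableBasis ho).preimage (hf n)
  · refine dense_iff_inter_open.2 fun U hU hUne => ?_
    obtain ⟨n, x, hxU, hx⟩ :=
      H U o hU hUne (isOpen_of_mem_countableBasis ho) (nonempty_of_mem_countableBasis ho)
    exact ⟨x, hxU, mem_iUnion.2 ⟨n, hx⟩⟩

theorem Dense.exists_inter_preimage_nonempty [TopologicalSpace X] {f : ι → X → Y}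
    (h : Dense (denseOrbitSet f)) {U : Set X} {W : Set Y} (hU : IsOpen U) (hUne : U.Nonempty)
    (hW : IsOpen W) (hWne : W.Nonempty) : ∃ n, (U ∩ f n ⁻¹' W).Nonempty := by
  obtain ⟨x, hxU, hx⟩ := h.inter_open_nonempty U hU hUne
  obtain ⟨_, hnW, n, rfl⟩ := hx.inter_open_nonempty W hW hWne
  exact ⟨n, x, hxU, hnW⟩

end DenseOrbit

theorem equiv_dense_orbit {X : Type*} [MetricSpace X] [CompactSpace X]
    (T : X ≃ₜ X) (d : ℕ) (p : Fin d → ℤ → ℤ) :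
    (∀ U : Set X, ∀ V : Fin d → Set X, IsOpen U → U.Nonempty →
        (∀ i, IsOpen (V i)) → (∀ i, (V i).Nonempty) →
        ∃ n : ℤ, (U ∩ ⋂ i, (fun x => (T.toEquiv ^ (p i n)) x) ⁻¹' V i).Nonempty)
    ↔ (∃ Y : Set X, Dense Y ∧ IsGδ Y ∧ ∀ x ∈ Y,
        Dense {v : Fin d → X | ∃ n : ℤ, v = fun i => (T.toEquiv ^ (p i n)) x}) := by
  set f : ℤ → X → Fin d → X := fun n x i => (T.toEquiv ^ (p i n)) x
  have hf : ∀ n, Continuous (f n) := fun n =>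
    continuous_pi fun i => T.continuous_toEquiv_zpow (p i n)
  have preimage_box (n : ℤ) (V : Fin d → Set X) :
      f n ⁻¹' univ.pi V = ⋂ i, (fun x => (T.toEquiv ^ (p i n)) x) ⁻¹' V i := by
    ext; simp [f]
  have orbit_eq (x : X) : {v : Fin d → X | ∃ n : ℤ, v = fun i => (T.toEquiv ^ (p i n)) x} =
      range fun n => f n x := by
    ext; simp [f, eq_comm]
  constructor
  · intro H
    refine ⟨denseOrbitSet f, dense_denseOrbitSet hf fun U W hU hUne hW ⟨w, hw⟩ => ?_,
      isGδ_denseOrbitSet hf, fun x hx => by rwa [orbit_eq]⟩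
    obtain ⟨V, hV, hVW⟩ := isOpen_pi_iff'.1 hW w hw
    obtain ⟨n, hn⟩ := H U V hU hUne (fun i => (hV i).1) fun i => ⟨w i, (hV i).2⟩
    rw [← preimage_box] at hn
    exact ⟨n, hn.mono (inter_subset_inter_right U (preimage_mono hVW))⟩
  · rintro ⟨Y, hYd, -, hY⟩ U V hU hUne hV hVne
    have hdense : Dense (denseOrbitSet f) :=
      hYd.mono fun x hx => show Dense _ from orbit_eq x ▸ hY x hx
    simpa only [← preimage_box] using hdense.exists_inter_preimage_nonempty hU hUne
      (isOpen_set_pi finite_univ fun i _ => hV i) (univ_pi_nonempty_iff.2 hVne)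
end

section
/- Let b, c be real numbers and m a nonzero integer such that {b m ⌈c m⌉} ≠ 1/2 and {c m} ≠ 1/2 (where ⌈·⌉ denotes nearest integer and {a} = a − ⌈a⌉). Then there exists δ > 0 such that for every integer n with {b n ⌈c n⌉}, {b n ⌈c m⌉}, {b m ⌈c n⌉}, {c n} all in (−δ, δ), one has ⌈b(n+m)⌈c(n+m)⌉⌉ = ⌈b n ⌈c n⌉⌉ + ⌈b m ⌈c m⌉⌉ + ⌈b n ⌈c m⌉⌉ + ⌈b m ⌈c n⌉⌉. -/
lemma sfrac_lb (a : ℝ) : -(1/2) ≤ sfrac a := by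
  have := Int.floor_le (a + 1/2)
  unfold sfrac nint; linarith

lemma sfrac_ub (a : ℝ) : sfrac a < 1/2 := by
  have := Int.lt_floor_add_one (a + 1/2)
  unfold sfrac nint; linarith

lemma nint_int (k : ℤ) : nint (k : ℝ) = k := by
  unfold nint
  rw [add_comm, Int.floor_add_intCast]
  norm_num

lemma nint_add_int (a : ℝ) (k : ℤ) : nint (a + k) = nint a + k := by
  unfold nint
  rw [add_right_comm, Int.floor_add_intCast]

lemma nint_zero_of (a : ℝ) (h1 : -(1/2) ≤ a) (h2 : a < 1/2) : nint a = 0 := by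
  unfold nint
  rw [Int.floor_eq_zero_iff]
  constructor <;> simp <;> linarith

lemma nint_split (a b : ℝ) (h1 : -(1/2) ≤ sfrac a + sfrac b)
    (h2 : sfrac a + sfrac b < 1/2) : nint (a + b) = nint a + nint b := by
  have e : a + b = (sfrac a + sfrac b) + ((nint a + nint b : ℤ) : ℝ) := by
    unfold sfrac; push_cast; ring
  rw [e, nint_add_int, nint_zero_of _ h1 h2, zero_add]

lemma nint_split4 (a b c d : ℝ)
    (h1 : -(1/2) ≤ sfrac a + sfrac b + sfrac c + sfrac d)
    (h2 : sfrac a + sfrac b + sfrac c + sfrac d < 1/2) :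
    nint (a + b + c + d) = nint a + nint b + nint c + nint d := by
  have e : a + b + c + d = (sfrac a + sfrac b + sfrac c + sfrac d) +
      ((nint a + nint b + nint c + nint d : ℤ) : ℝ) := by
    unfold sfrac; push_cast; ring
  rw [e, nint_add_int, nint_zero_of _ h1 h2, zero_add]

lemma half_grid (x b : ℝ) (q : ℤ) (hq : q ≠ 0) (K : ℤ)
    (heq : b * (q : ℝ) = (K : ℝ) - 1/2) (j : ℤ) (hx : x = b * j)
    (hsmall : |sfrac x| < 1 / (2 * |(q : ℝ)|)) : x = (nint x : ℝ) := by
  have hq' : (0:ℝ) < |(q:ℝ)| := abs_pos.2 (Int.cast_ne_zero.2 hq)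
  have h2q : (0:ℝ) < 2 * |(q:ℝ)| := by linarith
  set r : ℤ := j * (2*K - 1) - 2*q*(nint x) with hr
  have hx2 : sfrac x * (2*(q:ℝ)) = (r : ℝ) := by
    unfold sfrac; rw [hr]; push_cast
    linear_combination (2*(q:ℝ))*hx + (2*(j:ℝ))*heq
  have habs : |(r:ℝ)| < 1 := by
    have h2 : |sfrac x| * (2*|(q:ℝ)|) < 1 := by
      have := mul_lt_mul_of_pos_right hsmall h2q
      rwa [one_div, inv_mul_cancel₀ (ne_of_gt h2q)] at this
    calc |(r:ℝ)| = |sfrac x * (2*(q:ℝ))| := by rw [hx2]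
      _ = |sfrac x| * |2*(q:ℝ)| := abs_mul _ _
      _ = |sfrac x| * (2*|(q:ℝ)|) := by rw [abs_mul, abs_two]
      _ < 1 := h2
  have hr0 : r = 0 := by
    have h : |r| < 1 := by
      rw [← Int.cast_abs] at habs; exact_mod_cast habs
    have := abs_lt.mp h
    omega
  have hs0 : sfrac x = 0 := by
    rw [hr0] at hx2
    push_cast at hx2
    have hne : (2*(q:ℝ)) ≠ 0 := mul_ne_zero two_ne_zero (Int.cast_ne_zero.2 hq)
    rcases mul_eq_zero.1 hx2 with h | h
    · exact h
    · exact absurd h hne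
  unfold sfrac at hs0; linarith

theorem nint_bilinear_proper (b c : ℝ) (m : ℤ) (hm : m ≠ 0)
    (h1 : sfrac (b * m * (nint (c * m))) ≠ 1/2) (h2 : sfrac (c * m) ≠ 1/2) :
    ∃ δ > (0 : ℝ), ∀ n : ℤ,
      sfrac (b * n * (nint (c * n))) ∈ Set.Ioo (-δ) δ →
      sfrac (b * n * (nint (c * m))) ∈ Set.Ioo (-δ) δ →
      sfrac (b * m * (nint (c * n))) ∈ Set.Ioo (-δ) δ →
      sfrac (c * n) ∈ Set.Ioo (-δ) δ →
      nint (b * (n + m) * (nint (c * (n + m)))) =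
        nint (b * n * (nint (c * n))) + nint (b * m * (nint (c * m))) +
        nint (b * n * (nint (c * m))) + nint (b * m * (nint (c * n))) := by
  set M : ℤ := nint (c * (m:ℝ)) with hMdef
  -- c-part
  obtain ⟨δc, hδc, hC⟩ : ∃ δ > (0:ℝ), ∀ n : ℤ, |sfrac (c * (n:ℝ))| < δ →
      nint (c * (n:ℝ) + c * (m:ℝ)) = nint (c * (n:ℝ)) + nint (c * (m:ℝ)) := by
    rcases eq_or_ne (sfrac (c * (m:ℝ))) (-(1/2)) with hc | hc
    · have hmabs : (0:ℝ) < |(m:ℝ)| := abs_pos.2 (Int.cast_ne_zero.2 hm)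
      refine ⟨1 / (2 * |(m:ℝ)|), by positivity, ?_⟩
      intro n hn
      have heq : c * (m:ℝ) = (M : ℝ) - 1/2 := by
        have := hc; unfold sfrac at this; rw [← hMdef] at this; linarith
      have hint : c * (n:ℝ) = (nint (c * (n:ℝ)) : ℝ) :=
        half_grid _ c m hm M heq n rfl hn
      rw [hint, add_comm, nint_add_int, nint_int]
      omega
    · have hlb := sfrac_lb (c * (m:ℝ))
      have hub := sfrac_ub (c * (m:ℝ))
      have habs : |sfrac (c * (m:ℝ))| < 1/2 := by
        rw [abs_lt]
        exact ⟨lt_of_le_of_ne hlb (Ne.symm hc), hub⟩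
      refine ⟨1/2 - |sfrac (c * (m:ℝ))|, by linarith, ?_⟩
      intro n hn
      apply nint_split
      all_goals
        have a1 := abs_lt.1 hn
        have a2 := abs_lt.1 habs
        have h4 := neg_abs_le (sfrac (c * (m:ℝ)))
        have h5 := le_abs_self (sfrac (c * (m:ℝ)))
        linarith
  -- b-part
  obtain ⟨δb, hδb, hB⟩ : ∃ δ > (0:ℝ), ∀ N n : ℤ,
      |sfrac (b * (n:ℝ) * (N:ℝ))| < δ →
      |sfrac (b * (n:ℝ) * (M:ℝ))| < δ →
      |sfrac (b * (m:ℝ) * (N:ℝ))| < δ →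
      nint (b * (n:ℝ) * (N:ℝ) + b * (m:ℝ) * (M:ℝ) + b * (n:ℝ) * (M:ℝ) + b * (m:ℝ) * (N:ℝ)) =
        nint (b * (n:ℝ) * (N:ℝ)) + nint (b * (m:ℝ) * (M:ℝ)) +
        nint (b * (n:ℝ) * (M:ℝ)) + nint (b * (m:ℝ) * (N:ℝ)) := by
    rcases eq_or_ne (sfrac (b * (m:ℝ) * (M:ℝ))) (-(1/2)) with hb | hb
    · have hM0 : M ≠ 0 := by
        intro h
        rw [h] at hb
        simp only [Int.cast_zero, mul_zero] at hb
        have : sfrac 0 = 0 := by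
          unfold sfrac
          rw [show ((0:ℝ) = ((0:ℤ):ℝ)) from by norm_num, nint_int]
          norm_num
        rw [this] at hb
        norm_num at hb
      have hq : m * M ≠ 0 := mul_ne_zero hm hM0
      have hqabs : (0:ℝ) < |((m*M : ℤ):ℝ)| := abs_pos.2 (Int.cast_ne_zero.2 hq)
      set K : ℤ := nint (b * (m:ℝ) * (M:ℝ)) with hKdef
      have heq : b * (((m*M : ℤ)):ℝ) = (K : ℝ) - 1/2 := by
        have := hb; unfold sfrac at this; rw [← hKdef] at this
        push_cast; linarith
      refine ⟨1 / (2 * |((m*M : ℤ):ℝ)|), by positivity, ?_⟩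
      intro N n hn1 hn2 hn3
      have e1 : b * (n:ℝ) * (N:ℝ) = (nint (b * (n:ℝ) * (N:ℝ)) : ℝ) :=
        half_grid _ b (m*M) hq K heq (n*N) (by push_cast; ring) hn1
      have e2 : b * (n:ℝ) * (M:ℝ) = (nint (b * (n:ℝ) * (M:ℝ)) : ℝ) :=
        half_grid _ b (m*M) hq K heq (n*M) (by push_cast; ring) hn2
      have e3 : b * (m:ℝ) * (N:ℝ) = (nint (b * (m:ℝ) * (N:ℝ)) : ℝ) :=
        half_grid _ b (m*M) hq K heq (m*N) (by push_cast; ring) hn3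
      set A : ℤ := nint (b * (n:ℝ) * (N:ℝ))
      set B : ℤ := nint (b * (n:ℝ) * (M:ℝ))
      set C : ℤ := nint (b * (m:ℝ) * (N:ℝ))
      have e : b * (n:ℝ) * (N:ℝ) + b * (m:ℝ) * (M:ℝ) + b * (n:ℝ) * (M:ℝ) + b * (m:ℝ) * (N:ℝ)
          = b * (m:ℝ) * (M:ℝ) + ((A + B + C : ℤ) : ℝ) := by
        rw [e1, e2, e3]; push_cast; ring
      rw [e, nint_add_int]
      omega
    · have hlb := sfrac_lb (b * (m:ℝ) * (M:ℝ))
      have hub := sfrac_ub (b * (m:ℝ) * (M:ℝ))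
      have habs : |sfrac (b * (m:ℝ) * (M:ℝ))| < 1/2 := by
        rw [abs_lt]
        exact ⟨lt_of_le_of_ne hlb (Ne.symm hb), hub⟩
      refine ⟨(1/2 - |sfrac (b * (m:ℝ) * (M:ℝ))|)/3, by linarith, ?_⟩
      intro N n hn1 hn2 hn3
      apply nint_split4
      all_goals
        have a1 := abs_lt.1 hn1
        have a2 := abs_lt.1 hn2
        have a3 := abs_lt.1 hn3
        have a4 := abs_lt.1 habs
        have h4 := neg_abs_le (sfrac (b * (m:ℝ) * (M:ℝ)))
        have h5 := le_abs_self (sfrac (b * (m:ℝ) * (M:ℝ)))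
        linarith
  -- combine
  refine ⟨min δb δc, lt_min hδb hδc, ?_⟩
  intro n hn1 hn2 hn3 hn4
  have g1 : |sfrac (b * (n:ℝ) * ((nint (c * (n:ℝ))):ℝ))| < δb :=
    lt_of_lt_of_le (abs_lt.2 ⟨hn1.1, hn1.2⟩) (min_le_left _ _)
  have g2 : |sfrac (b * (n:ℝ) * (M:ℝ))| < δb :=
    lt_of_lt_of_le (abs_lt.2 ⟨hn2.1, hn2.2⟩) (min_le_left _ _)
  have g3 : |sfrac (b * (m:ℝ) * ((nint (c * (n:ℝ))):ℝ))| < δb :=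
    lt_of_lt_of_le (abs_lt.2 ⟨hn3.1, hn3.2⟩) (min_le_left _ _)
  have g4 : |sfrac (c * (n:ℝ))| < δc :=
    lt_of_lt_of_le (abs_lt.2 ⟨hn4.1, hn4.2⟩) (min_le_right _ _)
  have hcnm : nint (c * ((n:ℝ) + (m:ℝ))) = nint (c * (n:ℝ)) + M := by
    rw [show c * ((n:ℝ) + (m:ℝ)) = c * (n:ℝ) + c * (m:ℝ) from by ring]
    exact hC n g4
  set N : ℤ := nint (c * (n:ℝ)) with hNdef
  rw [hcnm]
  rw [show b * ((n:ℝ) + (m:ℝ)) * (((N + M : ℤ)):ℝ) =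
      b * (n:ℝ) * (N:ℝ) + b * (m:ℝ) * (M:ℝ) + b * (n:ℝ) * (M:ℝ) + b * (m:ℝ) * (N:ℝ) from by
    push_cast; ring]
  exact hB N n g1 g2 g3
end

section
/- Let a be a real number and m a nonzero integer with {a m²} ≠ 1/2. Then there exists δ > 0 such that for every integer n with {a n²} ∈ (−δ, δ) and {2 a m n} ∈ (−δ, δ), one has ⌈a(n+m)²⌉ = ⌈a n²⌉ + ⌈2 a m n⌉ + ⌈a m²⌉. -/
lemma nint_eq_of (x : ℝ) (N : ℤ) (h1 : -(1/2) ≤ x - N) (h2 : x - N < 1/2) :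
    nint x = N := by
  unfold nint
  rw [Int.floor_eq_iff]
  constructor
  · linarith
  · push_cast
    linarith

lemma sfrac_ge (x : ℝ) : -(1/2) ≤ sfrac x := by
  have := Int.floor_le (x + 1/2)
  unfold sfrac nint
  linarith

lemma sfrac_lt (x : ℝ) : sfrac x < 1/2 := by
  have := Int.sub_one_lt_floor (x + 1/2)
  unfold sfrac nint
  linarith

lemma sfrac_add_nint (x : ℝ) : x = sfrac x + nint x := by
  unfold sfrac; ring

theorem nint_quadratic_proper (a : ℝ) (m : ℤ) (hm : m ≠ 0)
    (h : sfrac (a * m ^ 2) ≠ 1/2) :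
    ∃ δ > (0 : ℝ), ∀ n : ℤ,
      sfrac (a * n ^ 2) ∈ Set.Ioo (-δ) δ →
      sfrac (2 * a * m * n) ∈ Set.Ioo (-δ) δ →
      nint (a * (n + m) ^ 2) =
        nint (a * n ^ 2) + nint (2 * a * m * n) + nint (a * m ^ 2) := by
  have hm' : (m : ℝ) ≠ 0 := Int.cast_ne_zero.mpr hm
  set f3 : ℝ := sfrac (a * m ^ 2) with hf3def
  set N3 : ℤ := nint (a * m ^ 2) with hN3def
  have hsplit : ∀ n : ℤ, a * ((n : ℝ) + m) ^ 2 =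
      a * n ^ 2 + 2 * a * m * n + a * m ^ 2 := by
    intro n; ring
  rcases eq_or_lt_of_le (sfrac_ge (a * m ^ 2)) with hf3 | hf3
  · -- f3 = -1/2 : a is rational with denominator 2m²
    have ham : a * m ^ 2 = (N3 : ℝ) - 1/2 := by
      have h' : a * m ^ 2 = f3 + N3 := sfrac_add_nint _
      have hf3' : f3 = -(1/2) := by rw [hf3def]; exact hf3.symm
      rw [h', hf3']; ring
    refine ⟨1 / (2 * (m : ℝ) ^ 2), by positivity, ?_⟩
    intro n h1 h2
    have key : ∀ x : ℝ, (∃ k : ℤ, 2 * (m : ℝ) ^ 2 * x = k) →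
        sfrac x ∈ Set.Ioo (-(1 / (2 * (m : ℝ) ^ 2))) (1 / (2 * (m : ℝ) ^ 2)) →
        sfrac x = 0 := by
      intro x ⟨k, hk⟩ hx
      have hpos : (0 : ℝ) < 2 * (m : ℝ) ^ 2 := by positivity
      have hj : ((k - 2 * m ^ 2 * nint x : ℤ) : ℝ) = 2 * (m : ℝ) ^ 2 * sfrac x := by
        push_cast
        unfold sfrac
        linear_combination -hk
      have habs : |((k - 2 * m ^ 2 * nint x : ℤ) : ℝ)| < 1 := by
        have hc : 2 * (m : ℝ) ^ 2 * (1 / (2 * (m : ℝ) ^ 2)) = 1 := by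
          field_simp
        rw [hj, abs_lt]
        obtain ⟨hl, hr⟩ := hx
        constructor
        · nlinarith [mul_lt_mul_of_pos_left hl hpos]
        · nlinarith [mul_lt_mul_of_pos_left hr hpos]
      have hz : (k - 2 * m ^ 2 * nint x : ℤ) = 0 := by
        have h' : |k - 2 * m ^ 2 * nint x| < 1 := by exact_mod_cast habs
        rw [abs_lt] at h'
        omega
      have : (2 : ℝ) * (m : ℝ) ^ 2 * sfrac x = 0 := by
        rw [← hj, hz]; norm_num
      have h2m : (2 : ℝ) * (m : ℝ) ^ 2 ≠ 0 := by positivity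
      exact (mul_eq_zero.mp this).resolve_left h2m
    have hf1 : sfrac (a * n ^ 2) = 0 := by
      apply key _ ⟨(2 * N3 - 1) * n ^ 2, ?_⟩ h1
      push_cast
      linear_combination 2 * (n : ℝ) ^ 2 * ham
    have hf2 : sfrac (2 * a * m * n) = 0 := by
      apply key _ ⟨(4 * N3 - 2) * m * n, ?_⟩ h2
      push_cast
      linear_combination 4 * (m : ℝ) * (n : ℝ) * ham
    have e1 := sfrac_add_nint (a * n ^ 2)
    have e2 := sfrac_add_nint (2 * a * m * n)
    rw [hf1] at e1
    rw [hf2] at e2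
    apply nint_eq_of
    · push_cast
      rw [hsplit n]
      push_cast at e1 e2 ⊢
      linarith [ham]
    · push_cast
      rw [hsplit n]
      push_cast at e1 e2 ⊢
      linarith [ham]
  · -- f3 > -1/2
    refine ⟨min (1/2 - f3) (f3 + 1/2) / 2, ?_, ?_⟩
    · have := sfrac_lt (a * m ^ 2)
      rw [← hf3def] at this
      have h1 : (0:ℝ) < 1/2 - f3 := by linarith
      have h2 : (0:ℝ) < f3 + 1/2 := by linarith
      positivity
    · intro n h1 h2
      obtain ⟨h1l, h1r⟩ := h1
      obtain ⟨h2l, h2r⟩ := h2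
      have hd1 : min (1/2 - f3) (f3 + 1/2) / 2 ≤ (1/2 - f3) / 2 := by
        gcongr; exact min_le_left _ _
      have hd2 : min (1/2 - f3) (f3 + 1/2) / 2 ≤ (f3 + 1/2) / 2 := by
        gcongr; exact min_le_right _ _
      have e1 := sfrac_add_nint (a * n ^ 2)
      have e2 := sfrac_add_nint (2 * a * m * n)
      have e3 := sfrac_add_nint (a * m ^ 2)
      rw [← hf3def, ← hN3def] at e3
      apply nint_eq_of
      · push_cast
        rw [hsplit n]
        push_cast at e1 e2 e3 ⊢
        linarith
      · push_cast
        rw [hsplit n]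
        push_cast at e1 e2 e3 ⊢
        linarith
end

section
/- Let (X, T) be a weakly mixing minimal topological dynamical system and let M, M₀ be real numbers with M ≠ 0. Suppose p : ℤ → ℤ satisfies M n − M₀ < p(n) < M n + M₀ for all n ∈ ℤ. Then for any non-empty open subsets U, V of X, the set N(p, U, V) = {n ∈ ℤ : U ∩ T^{−p(n)}V ≠ ∅} is thickly syndetic. -/
def blockStarts (L : ℕ) (S : Set ℤ) : Set ℤ :=
  {b | ∀ j : ℤ, 0 ≤ j → j ≤ (L : ℤ) → b + j ∈ S}

theorem Syndetic.mono {B C : Set ℤ} (hB : Syndetic B) (hBC : B ⊆ C) : Syndetic C := by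
  obtain ⟨L, hL⟩ := hB
  exact ⟨L, fun n => (hL n).imp fun _ ⟨hm, hbounds⟩ => ⟨hBC hm, hbounds⟩⟩

theorem Syndetic.preimage_sub_left {B : Set ℤ} (hB : Syndetic B) (c : ℤ) :
    Syndetic ((c - ·) ⁻¹' B) := by
  obtain ⟨L, hL⟩ := hB
  refine ⟨L, fun n => ?_⟩
  obtain ⟨m, hm, hlo, hhi⟩ := hL (c - n - L)
  exact ⟨c - m, by simpa using hm, by omega, by omega⟩

theorem thicklySyndetic_iff {S : Set ℤ} :
    ThicklySyndetic S ↔ ∀ L : ℕ, Syndetic (blockStarts L S) :=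
  ⟨fun h L => (h L).elim fun _ ⟨hB, hBS⟩ => hB.mono hBS, fun h L => ⟨_, h L, fun _ hb => hb⟩⟩

theorem ThicklySyndetic.neg {S : Set ℤ} (hS : ThicklySyndetic S) : ThicklySyndetic (-S) := by
  rw [thicklySyndetic_iff] at hS ⊢
  refine fun L => ((hS L).preimage_sub_left (-L)).mono fun b hb j hj₀ hjL => ?_
  have h := hb (L - j) (by omega) (by omega)
  rw [show -(L : ℤ) - b + (L - j) = -(b + j) by ring] at h
  exact Set.mem_neg.2 h

section CoarselyLinear

variable {A : Set ℤ} {M M₀ : ℝ} {p : ℤ → ℤ}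

theorem blockStarts_preimage_of_pos (hM : 0 < M)
    (hp : ∀ n : ℤ, M * n - M₀ < (p n : ℝ) ∧ (p n : ℝ) < M * n + M₀) {L L' : ℕ}
    (hL' : M * L + 2 * M₀ + M ≤ L') {b b' : ℤ} (hb' : b' ∈ blockStarts L' A)
    (hb_lo : b' + M₀ ≤ M * b) (hb_hi : M * b < b' + M₀ + M) :
    b ∈ blockStarts L (p ⁻¹' A) := by
  intro j hj₀ hjL
  have hMj : 0 ≤ M * j := by positivity
  have hMjL : M * j ≤ M * L := by gcongr; exact_mod_cast hjL
  obtain ⟨hp_lo, hp_hi⟩ := hp (b + j)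
  push_cast at hp_lo hp_hi
  have hlo : (b' : ℝ) < p (b + j) := by linarith
  have hhi : (p (b + j) : ℝ) < b' + L' := by linarith
  have h := hb' (p (b + j) - b') (by exact_mod_cast (sub_pos.2 hlo).le) (by
    have : (p (b + j) : ℤ) < b' + L' := by exact_mod_cast hhi
    omega)
  simpa using h

theorem ThicklySyndetic.preimage_of_pos (hA : ThicklySyndetic A) (hM : 0 < M)
    (hp : ∀ n : ℤ, M * n - M₀ < (p n : ℝ) ∧ (p n : ℝ) < M * n + M₀) :
    ThicklySyndetic (p ⁻¹' A) := by
  rw [thicklySyndetic_iff] at hA ⊢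
  intro L
  obtain ⟨L₁, hL₁⟩ := hA ⌈M * L + 2 * M₀ + M⌉₊
  set K := ⌈(L₁ + 1) / M⌉₊
  refine ⟨K + 1, fun n => ?_⟩
  obtain ⟨b', hb', hnb', hb'n⟩ := hL₁ ⌈M * n - M₀⌉
  -- `b` is the least integer with `b' + M₀ ≤ M * b`
  set b := ⌈(b' + M₀) / M⌉
  have hb_lo : b' + M₀ ≤ M * b := by
    rw [mul_comm, ← div_le_iff₀ hM]; exact Int.le_ceil _
  have hb_hi : M * b < b' + M₀ + M := by
    have := Int.ceil_lt_add_one ((b' + M₀) / M)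
    rw [div_add_one hM.ne', lt_div_iff₀ hM] at this
    linarith
  have hb'_lo : M * n - M₀ ≤ b' :=
    (Int.le_ceil _).trans (by exact_mod_cast hnb')
  have hb'_hi : (b' : ℝ) < M * n - M₀ + 1 + L₁ := by
    have := Int.ceil_lt_add_one (M * n - M₀)
    have : (b' : ℝ) ≤ ⌈M * n - M₀⌉ + L₁ := by exact_mod_cast hb'n
    linarith
  have hK : (L₁ + 1 : ℝ) ≤ M * K := by
    rw [mul_comm, ← div_le_iff₀ hM]; exact Nat.le_ceil _
  refine ⟨b, blockStarts_preimage_of_pos hM hp (Nat.le_ceil _) hb' hb_lo hb_hi, ?_, ?_⟩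
  · have : M * n ≤ M * b := by linarith
    exact_mod_cast le_of_mul_le_mul_left this hM
  · have : M * b < M * (n + K + 1) := by linarith
    have : b < n + K + 1 := by exact_mod_cast lt_of_mul_lt_mul_left this hM.le
    push_cast
    omega

theorem ThicklySyndetic.preimage_of_coarselyLinear (hA : ThicklySyndetic A) (hM : M ≠ 0)
    (hp : ∀ n : ℤ, M * n - M₀ < (p n : ℝ) ∧ (p n : ℝ) < M * n + M₀) :
    ThicklySyndetic (p ⁻¹' A) := by
  rcases hM.lt_or_gt with hneg | hpos
  · have hp' : ∀ n : ℤ, -M * n - M₀ < (p (-n) : ℝ) ∧ (p (-n) : ℝ) < -M * n + M₀ := fun n => by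
      simpa using hp (-n)
    convert (hA.preimage_of_pos (neg_pos.2 hneg) hp').neg using 1
    ext n
    simp
  · exact hA.preimage_of_pos hpos hp

end CoarselyLinear

theorem Homeomorph.toEquiv_zpow {X : Type*} [TopologicalSpace X] (T : X ≃ₜ X) (n : ℤ) :
    T.toEquiv ^ n = (T ^ n).toEquiv :=
  (map_zpow (⟨⟨Homeomorph.toEquiv, rfl⟩, fun _ _ => rfl⟩ : (X ≃ₜ X) →* Equiv.Perm X) T n).symm

theorem Homeomorph.continuous_toEquiv_zpow_s9 {X : Type*} [TopologicalSpace X] (T : X ≃ₜ X)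
    (n : ℤ) : Continuous (T.toEquiv ^ n) := by
  rw [T.toEquiv_zpow]
  exact (T ^ n).continuous

section ReturnTimes

variable {X : Type*} [TopologicalSpace X] (T : X ≃ₜ X)

def returnTimes (U V : Set X) : Set ℤ :=
  {n | (U ∩ (T.toEquiv ^ n) ⁻¹' V).Nonempty}

theorem mem_returnTimes_preimage_zpow {U V : Set X} {n s : ℤ} :
    n ∈ returnTimes T U ((T.toEquiv ^ s) ⁻¹' V) ↔ n + s ∈ returnTimes T U V := by
  simp only [returnTimes, Set.mem_ofPred_eq, Set.preimage_preimage, ← Equiv.Perm.mul_apply,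
    ← zpow_add, add_comm s]

/-- Compactness turns the density of every orbit into a uniform bound on the waiting time
before any point enters `V`. -/
theorem syndetic_returnTimes [CompactSpace X]
    (hmin : ∀ x : X, Dense {y : X | ∃ n : ℤ, y = (T.toEquiv ^ n) x})
    {U V : Set X} (hV : IsOpen V) (hU : U.Nonempty) (hVne : V.Nonempty) :
    Syndetic (returnTimes T U V) := by
  have hcover : Set.univ ⊆ ⋃ k : ℤ, (T.toEquiv ^ k) ⁻¹' V := fun x _ => by
    obtain ⟨_, ⟨k, rfl⟩, hk⟩ := (hmin x).exists_mem_open hV hVne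
    exact Set.mem_iUnion.2 ⟨k, hk⟩
  obtain ⟨t, ht⟩ := isCompact_univ.elim_finite_subcover _
    (fun k => hV.preimage (T.continuous_toEquiv_zpow_s9 k)) hcover
  have hvisit : ∀ x : X, ∃ k ∈ t, (T.toEquiv ^ k) x ∈ V := fun x => by
    simpa using ht (Set.mem_univ x)
  obtain ⟨x₀, hx₀⟩ := hU
  have ht_ne : t.Nonempty := (hvisit x₀).imp fun _ h => h.1
  refine ⟨(t.max' ht_ne - t.min' ht_ne).toNat, fun n => ?_⟩
  obtain ⟨k, hk, hkV⟩ := hvisit ((T.toEquiv ^ (n - t.min' ht_ne)) x₀)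
  rw [← Equiv.Perm.mul_apply, ← zpow_add] at hkV
  have := t.min'_le k hk
  have := t.le_max' k hk
  exact ⟨_, ⟨x₀, hx₀, hkV⟩, by omega, by omega⟩

theorem exists_returnTimes_subset_inter
    (hwm : ∀ U V : Set (X × X), IsOpen U → IsOpen V → U.Nonempty → V.Nonempty →
      ∃ n : ℤ, (U ∩ (fun q => ((T.toEquiv ^ n) q.1, (T.toEquiv ^ n) q.2)) ⁻¹' V).Nonempty)
    {U₁ V₁ U₂ V₂ : Set X} (hU₁ : IsOpen U₁) (hV₁ : IsOpen V₁) (hU₂ : IsOpen U₂)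
    (hV₂ : IsOpen V₂) (hU₁ne : U₁.Nonempty) (hV₁ne : V₁.Nonempty) (hU₂ne : U₂.Nonempty)
    (hV₂ne : V₂.Nonempty) :
    ∃ U V : Set X, IsOpen U ∧ IsOpen V ∧ U.Nonempty ∧ V.Nonempty ∧
      returnTimes T U V ⊆ returnTimes T U₁ V₁ ∩ returnTimes T U₂ V₂ := by
  obtain ⟨m, ⟨u, v⟩, ⟨hu₁, hv₁⟩, hu₂, hv₂⟩ := hwm (U₁ ×ˢ V₁) (U₂ ×ˢ V₂) (hU₁.prod hV₁)
    (hU₂.prod hV₂) (hU₁ne.prod hV₁ne) (hU₂ne.prod hV₂ne)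
  -- `m` is a common return time of `U₁` to `U₂` and of `V₁` to `V₂`
  have hcont := T.continuous_toEquiv_zpow_s9 m
  refine ⟨U₁ ∩ (T.toEquiv ^ m) ⁻¹' U₂, V₁ ∩ (T.toEquiv ^ m) ⁻¹' V₂,
    hU₁.inter (hU₂.preimage hcont), hV₁.inter (hV₂.preimage hcont),
    ⟨u, hu₁, hu₂⟩, ⟨v, hv₁, hv₂⟩, ?_⟩
  rintro k ⟨x, ⟨hx₁, hx₂⟩, hkx₁, hkx₂⟩
  refine ⟨⟨x, hx₁, hkx₁⟩, (T.toEquiv ^ m) x, hx₂, ?_⟩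
  rwa [Set.mem_preimage, Equiv.Perm.zpow_apply_comm]

theorem exists_returnTimes_subset_blockStarts
    (hwm : ∀ U V : Set (X × X), IsOpen U → IsOpen V → U.Nonempty → V.Nonempty →
      ∃ n : ℤ, (U ∩ (fun q => ((T.toEquiv ^ n) q.1, (T.toEquiv ^ n) q.2)) ⁻¹' V).Nonempty)
    {U V : Set X} (hU : IsOpen U) (hV : IsOpen V) (hUne : U.Nonempty) (hVne : V.Nonempty)
    (L : ℕ) :
    ∃ U' V' : Set X, IsOpen U' ∧ IsOpen V' ∧ U'.Nonempty ∧ V'.Nonempty ∧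
      returnTimes T U' V' ⊆ blockStarts L (returnTimes T U V) := by
  induction L with
  | zero =>
    refine ⟨U, V, hU, hV, hUne, hVne, fun k hk j hj₀ hj => ?_⟩
    rwa [show j = 0 by omega, add_zero]
  | succ L ih =>
    obtain ⟨U₁, V₁, hU₁, hV₁, hU₁ne, hV₁ne, hsub⟩ := ih
    have hVs := hV.preimage (T.continuous_toEquiv_zpow_s9 (L + 1))
    have hVsne : ((T.toEquiv ^ ((L : ℤ) + 1)) ⁻¹' V).Nonempty :=
      hVne.preimage (Equiv.surjective _)
    obtain ⟨U', V', hU', hV', hU'ne, hV'ne, hsub'⟩ :=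
      exists_returnTimes_subset_inter T hwm hU₁ hV₁ hU hVs hU₁ne hV₁ne hUne hVsne
    refine ⟨U', V', hU', hV', hU'ne, hV'ne, fun k hk j hj₀ hj => ?_⟩
    obtain ⟨hk₁, hk₂⟩ := hsub' hk
    rcases (show j ≤ L ∨ j = L + 1 by push_cast at hj; omega) with hjL | rfl
    · exact hsub hk₁ j hj₀ hjL
    · exact (mem_returnTimes_preimage_zpow T).1 hk₂

theorem thicklySyndetic_returnTimes [CompactSpace X]
    (hmin : ∀ x : X, Dense {y : X | ∃ n : ℤ, y = (T.toEquiv ^ n) x})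
    (hwm : ∀ U V : Set (X × X), IsOpen U → IsOpen V → U.Nonempty → V.Nonempty →
      ∃ n : ℤ, (U ∩ (fun q => ((T.toEquiv ^ n) q.1, (T.toEquiv ^ n) q.2)) ⁻¹' V).Nonempty)
    {U V : Set X} (hU : IsOpen U) (hV : IsOpen V) (hUne : U.Nonempty) (hVne : V.Nonempty) :
    ThicklySyndetic (returnTimes T U V) := by
  refine thicklySyndetic_iff.2 fun L => ?_
  obtain ⟨U', V', -, hV', hU'ne, hV'ne, hsub⟩ :=
    exists_returnTimes_subset_blockStarts T hwm hU hV hUne hVne L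
  exact (syndetic_returnTimes T hmin hV' hU'ne hV'ne).mono hsub

end ReturnTimes

theorem N_p_thickly_syndetic {X : Type*} [MetricSpace X] [CompactSpace X]
    (T : X ≃ₜ X)
    (hmin : ∀ x : X, Dense {y : X | ∃ n : ℤ, y = (T.toEquiv ^ n) x})
    (hwm : ∀ U V : Set (X × X), IsOpen U → IsOpen V → U.Nonempty → V.Nonempty →
      ∃ n : ℤ, (U ∩ (fun q => ((T.toEquiv ^ n) q.1, (T.toEquiv ^ n) q.2)) ⁻¹' V).Nonempty)
    (M M₀ : ℝ) (hM : M ≠ 0) (p : ℤ → ℤ)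
    (hp : ∀ n : ℤ, M * n - M₀ < (p n : ℝ) ∧ (p n : ℝ) < M * n + M₀)
    (U V : Set X) (hU : IsOpen U) (hV : IsOpen V)
    (hUne : U.Nonempty) (hVne : V.Nonempty) :
    ThicklySyndetic {n : ℤ | (U ∩ (fun x => (T.toEquiv ^ (p n)) x) ⁻¹' V).Nonempty} :=
  (thicklySyndetic_returnTimes T hmin hwm hU hV hUne hVne).preimage_of_coarselyLinear hM hp
end

section
/- Let a, b ∈ ℝ ∖ ℚ and m a nonzero integer, and assume {a m} ≠ 1/2 and {b m} ≠ 1/2 (nearest-integer fractional part). Then there exists δ > 0 such that for every integer n with {a n} ∈ (−δ, δ) and {b n} ∈ (−δ, δ), one has ⌈a(n+m)⌉⌈b(n+m)⌉ = ⌈a n⌉⌈b n⌉ + ⌈a m⌉⌈b n⌉ + ⌈a n⌉⌈b m⌉ + ⌈a m⌉⌈b m⌉. -/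
/-! `nint` is Mathlib's `round`, so `sfrac x ∈ [-1/2, 1/2)`, with the endpoint `-1/2` excluded for
irrational `x`. Rounding is additive as soon as the two signed fractional parts add up to less than
`1/2` in absolute value. For irrational `a` and `m ≠ 0`, `|{a m}| < 1/2`, so any `δ` below the gap
`1/2 - max |{a m}| |{b m}|` makes both `⌈a (n + m)⌉` and `⌈b (n + m)⌉` split additively, and the
product identity is the expansion of `(⌈a n⌉ + ⌈a m⌉) (⌈b n⌉ + ⌈b m⌉)`. -/

open Set

lemma nint_eq_round (x : ℝ) : nint x = round x :=
  (round_eq x).symm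

lemma sfrac_mem_Ico (x : ℝ) : sfrac x ∈ Ico (-(1 / 2)) (1 / 2) := by
  have h := round_eq_iff.1 (nint_eq_round x).symm
  simp only [sfrac, mem_Ico] at h ⊢
  constructor <;> linarith [h.1, h.2]

lemma Irrational.abs_sfrac_lt_half {x : ℝ} (hx : Irrational x) : |sfrac x| < 1 / 2 := by
  have hne : sfrac x ≠ -(1 / 2) := fun h ↦ hx.ne_rat (nint x - 1 / 2) <| by
    push_cast
    simp only [sfrac] at h
    linarith
  obtain ⟨hlo, hhi⟩ := sfrac_mem_Ico x
  exact abs_lt.2 ⟨lt_of_le_of_ne hlo hne.symm, hhi⟩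

lemma nint_add {x y : ℝ} (h : sfrac x + sfrac y ∈ Ico (-(1 / 2)) (1 / 2)) :
    nint (x + y) = nint x + nint y := by
  have hsplit : x + y = (sfrac x + sfrac y) + ((nint x + nint y : ℤ) : ℝ) := by
    push_cast [sfrac]
    ring
  rw [hsplit, nint_eq_round, round_add_intCast, round_eq_zero_iff.2 h, zero_add]

lemma nint_add_of_abs_sfrac_add_abs_sfrac_lt {x y : ℝ} (h : |sfrac x| + |sfrac y| < 1 / 2) :
    nint (x + y) = nint x + nint y := by
  have hsum := (abs_add_le (sfrac x) (sfrac y)).trans_lt h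
  exact nint_add ⟨(abs_lt.1 hsum).1.le, (abs_lt.1 hsum).2⟩

theorem nint_product_proper_general (a b : ℝ) (ha : Irrational a) (hb : Irrational b)
    (m : ℤ) (hm : m ≠ 0) :
    ∃ δ > (0 : ℝ), ∀ n : ℤ,
      sfrac (a * n) ∈ Set.Ioo (-δ) δ → sfrac (b * n) ∈ Set.Ioo (-δ) δ →
      nint (a * (n + m)) * nint (b * (n + m)) =
        nint (a * n) * nint (b * n) + nint (a * m) * nint (b * n) +
        nint (a * n) * nint (b * m) + nint (a * m) * nint (b * m) := by
  have hgap : ∀ c : ℝ, Irrational c → 0 < 1 / 2 - |sfrac (c * m)| := fun c hc ↦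
    sub_pos.2 (hc.mul_intCast hm).abs_sfrac_lt_half
  refine ⟨min (1 / 2 - |sfrac (a * m)|) (1 / 2 - |sfrac (b * m)|),
    lt_min (hgap a ha) (hgap b hb), fun n hna hnb ↦ ?_⟩
  have hsplit : ∀ c : ℝ, |sfrac (c * n)| < 1 / 2 - |sfrac (c * m)| →
      nint (c * (n + m)) = nint (c * n) + nint (c * m) := fun c hc ↦ by
    rw [mul_add]
    exact nint_add_of_abs_sfrac_add_abs_sfrac_lt (by linarith)
  rw [hsplit a ((abs_lt.2 hna).trans_le (min_le_left _ _)),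
    hsplit b ((abs_lt.2 hnb).trans_le (min_le_right _ _))]
  ring

theorem nint_product_proper (a b : ℝ) (ha : Irrational a) (hb : Irrational b)
    (m : ℤ) (hm : m ≠ 0) (h1 : sfrac (a * m) ≠ 1/2) (h2 : sfrac (b * m) ≠ 1/2) :
    ∃ δ > (0 : ℝ), ∀ n : ℤ,
      sfrac (a * n) ∈ Set.Ioo (-δ) δ → sfrac (b * n) ∈ Set.Ioo (-δ) δ →
      nint (a * (n + m)) * nint (b * (n + m)) =
        nint (a * n) * nint (b * n) + nint (a * m) * nint (b * n) +
        nint (a * n) * nint (b * m) + nint (a * m) * nint (b * m) :=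
  nint_product_proper_general a b ha hb m hm
end

section
/- Let p : ℤ → ℤ and suppose there exist reals M ≠ 0 and M₀ ≥ 0 with |p(n) − M n| < M₀ for all n ∈ ℤ. Then for every thickly syndetic set S ⊆ ℤ, the preimage-type set {n ∈ ℤ : p(n) ∈ S} is thickly syndetic. -/
theorem thicklySyndetic_preimage (p : ℤ → ℤ) (M M₀ : ℝ) (hM : M ≠ 0) (hM₀ : 0 ≤ M₀)
    (hp : ∀ n : ℤ, |(p n : ℝ) - M * n| < M₀) :
    ∀ S : Set ℤ, ThicklySyndetic S → ThicklySyndetic {n : ℤ | p n ∈ S} := by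
  intro S hS L
  have hA : (0:ℝ) < |M| := abs_pos.mpr hM
  set A := |M| with hAdef
  set C : ℝ := M₀ + A * L with hCdef
  have hC0 : 0 ≤ C := by positivity
  set L' : ℕ := ⌈2*C + A⌉₊ with hL'def
  have hL'ge : 2*C + A ≤ (L' : ℝ) := Nat.le_ceil _
  obtain ⟨B', hB'syn, hB'blk⟩ := hS L'
  obtain ⟨K, hK⟩ := hB'syn
  have claim : ∀ t : ℝ, ∃ b : ℤ, ∃ b' ∈ B',
      t ≤ (b:ℝ) ∧ (b:ℝ) ≤ t + (1+K)/A + 1 ∧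
      (b':ℝ) + C ≤ M*b ∧ M*b ≤ (b':ℝ) + L' - C := by
    intro t
    rcases hM.lt_or_gt with hMneg | hMpos
    · -- M < 0
      have hAeq : A = -M := abs_of_neg hMneg
      obtain ⟨b', hb'B, hlo, hhi⟩ := hK (⌊M*t - L' + C⌋ - K)
      set α : ℝ := ((b':ℝ) + L' - C)/M with hα
      have hMα : M * α = (b':ℝ) + L' - C := by
        rw [hα]; field_simp
      have h1 : α ≤ (⌈α⌉:ℝ) := Int.le_ceil α
      have h2 : ((⌈α⌉:ℝ)) < α + 1 := Int.ceil_lt_add_one α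
      have hhi' : (b':ℝ) ≤ M*t - L' + C := by
        have h3 : (b':ℝ) ≤ (⌊M*t - L' + C⌋ : ℝ) := by
          have : b' ≤ ⌊M*t - L' + C⌋ := by omega
          exact_mod_cast this
        linarith [Int.floor_le (M*t - L' + C)]
      have hlo' : M*t - L' + C - 1 - K ≤ (b':ℝ) := by
        have h3 : ((⌊M*t - L' + C⌋ : ℤ) : ℝ) - K ≤ (b':ℝ) := by
          have : ⌊M*t - L' + C⌋ - K ≤ b' := hlo
          exact_mod_cast this
        linarith [Int.lt_floor_add_one (M*t - L' + C)]
      have hmul1 : M*(α+1) < M*(⌈α⌉:ℝ) := by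
        exact mul_lt_mul_of_neg_left h2 hMneg
      have hmul2 : M*(⌈α⌉:ℝ) ≤ M*α := by
        exact mul_le_mul_of_nonpos_left h1 (le_of_lt hMneg)
      have hdiv : (1+(K:ℝ))/A * A = 1+K := div_mul_cancel₀ _ (ne_of_gt hA)
      refine ⟨⌈α⌉, b', hb'B, ?_, ?_, ?_, ?_⟩
      · -- t ≤ ⌈α⌉
        have ht : t ≤ α := by
          by_contra h
          push_neg at h
          have := mul_lt_mul_of_neg_left h hMneg
          linarith
        linarith
      · -- ⌈α⌉ ≤ t + (1+K)/A + 1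
        have hαle : α ≤ t + (1+K)/A := by
          by_contra h
          push_neg at h
          have h9 := mul_lt_mul_of_pos_left h hA
          rw [mul_add] at h9
          have h8 : A * ((1+(K:ℝ))/A) = 1+K := mul_div_cancel₀ _ (ne_of_gt hA)
          rw [h8, hAeq] at h9
          linarith
        linarith
      · linarith
      · linarith
    · -- 0 < M
      have hAeq : A = M := abs_of_pos hMpos
      obtain ⟨b', hb'B, hlo, hhi⟩ := hK ⌈M*t - C⌉
      set α : ℝ := ((b':ℝ) + C)/M with hα
      have hMα : M * α = (b':ℝ) + C := by
        rw [hα]; field_simp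
      have h1 : α ≤ (⌈α⌉:ℝ) := Int.le_ceil α
      have h2 : ((⌈α⌉:ℝ)) < α + 1 := Int.ceil_lt_add_one α
      have hlo' : M*t - C ≤ (b':ℝ) := by
        have h3 : ((⌈M*t - C⌉ : ℤ) : ℝ) ≤ (b':ℝ) := by exact_mod_cast hlo
        linarith [Int.le_ceil (M*t - C)]
      have hhi' : (b':ℝ) ≤ M*t - C + 1 + K := by
        have h3 : (b':ℝ) ≤ ((⌈M*t - C⌉ : ℤ) : ℝ) + K := by exact_mod_cast hhi
        linarith [Int.ceil_lt_add_one (M*t - C)]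
      have hmul1 : M*α ≤ M*(⌈α⌉:ℝ) := by
        exact mul_le_mul_of_nonneg_left h1 (le_of_lt hMpos)
      have hmul2 : M*(⌈α⌉:ℝ) < M*(α+1) := by
        exact mul_lt_mul_of_pos_left h2 hMpos
      have hdiv : (1+(K:ℝ))/A * A = 1+K := div_mul_cancel₀ _ (ne_of_gt hA)
      refine ⟨⌈α⌉, b', hb'B, ?_, ?_, ?_, ?_⟩
      · have ht : t ≤ α := by
          by_contra h
          push_neg at h
          have := mul_lt_mul_of_pos_left h hMpos
          linarith
        linarith
      · have hαle : α ≤ t + (1+K)/A := by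
          by_contra h
          push_neg at h
          have h9 := mul_lt_mul_of_pos_left h hA
          rw [mul_add] at h9
          have h8 : A * ((1+(K:ℝ))/A) = 1+K := mul_div_cancel₀ _ (ne_of_gt hA)
          rw [h8, hAeq] at h9
          linarith
        linarith
      · linarith
      · linarith
  set L'' : ℕ := ⌈(1+(K:ℝ))/A⌉₊ + 1 with hL''def
  refine ⟨{b : ℤ | ∃ b' ∈ B', (b':ℝ) + C ≤ M*b ∧ M*b ≤ (b':ℝ) + L' - C}, ⟨L'', ?_⟩, ?_⟩
  · intro n
    obtain ⟨b, b', hb'B, ht1, ht2, ht3, ht4⟩ := claim n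
    refine ⟨b, ⟨b', hb'B, ht3, ht4⟩, by exact_mod_cast ht1, ?_⟩
    have hceil : (1+(K:ℝ))/A ≤ (⌈(1+(K:ℝ))/A⌉₊ : ℝ) := Nat.le_ceil _
    have hb : (b:ℝ) ≤ (n:ℝ) + (L'':ℕ) := by
      rw [hL''def]; push_cast; linarith
    exact_mod_cast hb
  · rintro b ⟨b', hb'B, h3, h4⟩ j hj0 hjL
    have habs := abs_lt.mp (hp (b+j))
    push_cast at habs
    have hexp : M*((b:ℝ)+(j:ℝ)) = M*(b:ℝ) + M*(j:ℝ) := by ring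
    have hj : |M*(j:ℝ)| ≤ A * L := by
      rw [abs_mul]
      have hjle : |(j:ℝ)| ≤ (L:ℝ) := by
        rw [abs_of_nonneg (by exact_mod_cast hj0)]
        exact_mod_cast hjL
      exact mul_le_mul_of_nonneg_left hjle (abs_nonneg M)
    have hjabs := abs_le.mp hj
    have hlow : (b':ℝ) < (p (b+j) : ℝ) := by
      rw [hCdef] at h3; linarith
    have hup : (p (b+j) : ℝ) < (b':ℝ) + L' := by
      rw [hCdef] at h4; linarith
    have h5 : b' < p (b+j) := by exact_mod_cast hlow
    have h6 : p (b+j) < b' + (L':ℤ) := by exact_mod_cast hup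
    have hmem := hB'blk b' hb'B (p (b+j) - b') (by omega) (by omega)
    have heq : b' + (p (b+j) - b') = p (b+j) := by ring
    rw [heq] at hmem
    exact hmem
end
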